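/- arXiv:math/0002085 — 5 statements merged into one kernel-verified Lean document; each statement's English description precedes it below -/
import Mathlib

section
/- The convolution of two log-concave sequences of nonnegative reals with no internal zeros is log-concave: if (a_n) and (b_n) are finitely supported sequences indexed by ℕ with a_n² ≥ a_{n-1}a_{n+1} and b_n² ≥ b_{n-1}b_{n+1} for all n ≥ 1, and each has support an interval, then c_n = Σ_k a_k b_{n-k} satisfies c_n² ≥ c_{n-1}c_{n+1} for all n ≥ 1. -/
/-!
Ratio-antitonicity, `a i * a (j + 1) ≤ a (i + 1) * a j` for `i ≤ j`, follows from log-concavity by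
chaining consecutive instances. The chaining cancels a middle term `a j`, and this is where the
absence of internal zeros enters: if `a j = 0`, then `a i = 0` or `a (j + 2) = 0`.

After extending `a` and `b` by zero to `ℤ`, both `c (n - 1) * c (n + 1)` and `c n * c n` are double
sums over pairs `(i, j)`. Symmetrized in `(i, j)`, the difference of their summands factors as
`(a (i + 1) * a j - a i * a (j + 1)) * (b (n - 1 - i) * b (n - j) - b (n - 1 - j) * b (n - i))`,
a product of two terms that are nonnegative for `i ≤ j` by ratio-antitonicity of `a` and of `b`.
-/

open Finset

def RatioAntitone {ι R : Type*} [Preorder ι] [Add ι] [One ι] [Mul R] [LE R] (a : ι → R) : Prop :=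
  ∀ ⦃i j : ι⦄, i ≤ j → a i * a (j + 1) ≤ a (i + 1) * a j

section ZeroExtend

variable {R : Type*}

noncomputable def zeroExtend [Zero R] (a : ℕ → R) : ℤ → R :=
  Function.extend ((↑) : ℕ → ℤ) a 0

@[simp]
theorem zeroExtend_natCast [Zero R] (a : ℕ → R) (n : ℕ) : zeroExtend a n = a n :=
  Nat.cast_injective.extend_apply a 0 n

theorem zeroExtend_of_neg [Zero R] (a : ℕ → R) {k : ℤ} (hk : k < 0) : zeroExtend a k = 0 :=
  Function.extend_apply' _ _ _ fun ⟨n, hn⟩ => by omega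

variable [NonUnitalNonAssocSemiring R]

theorem sum_range_eq_sum_Ico_zeroExtend (a b : ℕ → R) (m : ℕ) {p l u : ℤ} (hp : (m : ℤ) = p)
    (hl : l ≤ 0) (hu : p < u) :
    ∑ k ∈ range (m + 1), a k * b (m - k) =
      ∑ k ∈ Ico l u, zeroExtend a k * zeroExtend b (p - k) := by
  have hsub : (range (m + 1)).map Nat.castEmbedding ⊆ Ico l u := by
    intro k hk
    simp only [mem_map, mem_range, Nat.castEmbedding_apply] at hk
    obtain ⟨k, hk, rfl⟩ := hk
    simp only [mem_Ico]
    omega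
  rw [← sum_subset hsub, sum_map]
  · refine sum_congr rfl fun k hk => ?_
    rw [Nat.castEmbedding_apply, ← hp, ← Nat.cast_sub (by simpa [Nat.lt_succ_iff] using hk),
      zeroExtend_natCast, zeroExtend_natCast]
  · intro k _ hk
    simp only [mem_map, mem_range, Nat.castEmbedding_apply, not_exists, not_and] at hk
    rcases lt_or_ge k 0 with hk0 | hk0
    · rw [zeroExtend_of_neg a hk0, zero_mul]
    · lift k to ℕ using hk0
      have hmk : m < k := not_le.1 fun h => hk k (Nat.lt_succ_of_le h) rfl
      rw [zeroExtend_of_neg b (by omega), mul_zero]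

theorem sum_range_eq_sum_Ico_zeroExtend_succ (a b : ℕ → R) (m : ℕ) {p l u : ℤ}
    (hp : (m : ℤ) = p + 1) (hl : l < 0) (hu : p < u) :
    ∑ k ∈ range (m + 1), a k * b (m - k) =
      ∑ k ∈ Ico l u, zeroExtend a (k + 1) * zeroExtend b (p - k) := by
  rw [sum_range_eq_sum_Ico_zeroExtend a b m hp (show l + 1 ≤ 0 by omega)
    (show p + 1 < u + 1 by omega), ← sum_Ico_add']
  simp only [add_sub_add_right_eq_sub]

theorem RatioAntitone.zeroExtend [PartialOrder R] [CanonicallyOrderedAdd R] {a : ℕ → R}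
    (ha : RatioAntitone a) : RatioAntitone (zeroExtend a) := by
  intro i j hij
  rcases lt_or_ge i 0 with hi | hi
  · simp [zeroExtend_of_neg a hi]
  · lift j to ℕ using hi.trans hij
    lift i to ℕ using hi
    simpa only [← Nat.cast_add_one, zeroExtend_natCast] using ha (Int.ofNat_le.mp hij)

end ZeroExtend

section OrderedSemiring

variable {R : Type*} [CommSemiring R] [LinearOrder R] [IsStrictOrderedRing R]

theorem sum_mul_sum_le_sum_mul_sum_of_symm_le {ι : Type*} (s : Finset ι) (x y u v : ι → R)
    (h : ∀ i ∈ s, ∀ j ∈ s, x i * y j + x j * y i ≤ u i * v j + u j * v i) :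
    (∑ i ∈ s, x i) * (∑ j ∈ s, y j) ≤ (∑ i ∈ s, u i) * (∑ j ∈ s, v j) := by
  have two_mul_sum_mul_sum (f g : ι → R) :
      2 * ((∑ i ∈ s, f i) * ∑ j ∈ s, g j) = ∑ i ∈ s, ∑ j ∈ s, (f i * g j + f j * g i) := by
    simp only [sum_mul_sum, two_mul, sum_add_distrib]
    rw [sum_comm (f := fun i j => f j * g i)]
  refine le_of_mul_le_mul_left ?_ two_pos
  rw [two_mul_sum_mul_sum, two_mul_sum_mul_sum]
  exact sum_le_sum fun i hi => sum_le_sum fun j hj => h i hi j hj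

variable [CanonicallyOrderedAdd R]

theorem ratioAntitone_of_logConcave {a : ℕ → R} (hlc : ∀ n, a n * a (n + 2) ≤ a (n + 1) ^ 2)
    (hint : ∀ i j k, i ≤ j → j ≤ k → a i ≠ 0 → a k ≠ 0 → a j ≠ 0) : RatioAntitone a := by
  intro i j hij
  induction j, hij using Nat.le_induction with
  | base => rw [mul_comm]
  | succ j hij ih =>
    show a i * a (j + 2) ≤ a (i + 1) * a (j + 1)
    by_cases hj : a j = 0
    · obtain hi | hj2 : a i = 0 ∨ a (j + 2) = 0 := by
        by_contra! h
        exact hint i j (j + 2) hij (by omega) h.1 h.2 hj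
      · simp [hi]
      · simp [hj2]
    · refine le_of_mul_le_mul_right ?_ (pos_iff_ne_zero.mpr hj)
      calc a i * a (j + 2) * a j = a i * (a j * a (j + 2)) := by ring
        _ ≤ a i * a (j + 1) ^ 2 := by gcongr; exact hlc j
        _ = a i * a (j + 1) * a (j + 1) := by ring
        _ ≤ a (i + 1) * a j * a (j + 1) := by gcongr
        _ = a (i + 1) * a (j + 1) * a j := by ring

theorem RatioAntitone.sum_mul_sum_le {A B : ℤ → R} (hA : RatioAntitone A)
    (hB : RatioAntitone B) (s : Finset ℤ) (p : ℤ) :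
    (∑ k ∈ s, A k * B (p - k)) * (∑ k ∈ s, A (k + 1) * B (p + 1 - k)) ≤
      (∑ k ∈ s, A k * B (p + 1 - k)) * (∑ k ∈ s, A (k + 1) * B (p - k)) := by
  have key (i j : ℤ) (hij : i ≤ j) :
      A i * B (p - i) * (A (j + 1) * B (p + 1 - j)) + A j * B (p - j) * (A (i + 1) * B (p + 1 - i))
        ≤ A i * B (p + 1 - i) * (A (j + 1) * B (p - j))
          + A j * B (p + 1 - j) * (A (i + 1) * B (p - i)) := by
    have hB' := hB (show p - j ≤ p - i by omega)
    rw [sub_add_eq_add_sub, sub_add_eq_add_sub, mul_comm (B (p + 1 - j))] at hB'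
    calc _ = A i * A (j + 1) * (B (p - i) * B (p + 1 - j))
            + A (i + 1) * A j * (B (p - j) * B (p + 1 - i)) := by ring
      _ ≤ A i * A (j + 1) * (B (p - j) * B (p + 1 - i))
            + A (i + 1) * A j * (B (p - i) * B (p + 1 - j)) :=
        mul_add_mul_le_mul_add_mul (hA hij) hB'
      _ = _ := by ring
  refine sum_mul_sum_le_sum_mul_sum_of_symm_le s _ _ _ _ fun i _ j _ => ?_
  rcases le_total i j with hij | hji
  · exact key i j hij
  · exact (add_comm _ _).trans_le ((key j i hji).trans_eq (add_comm _ _))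

end OrderedSemiring

theorem stmt_2_general (a b : ℕ → NNReal)
    (halc : ∀ n : ℕ, 1 ≤ n → a (n - 1) * a (n + 1) ≤ a n ^ 2)
    (hblc : ∀ n : ℕ, 1 ≤ n → b (n - 1) * b (n + 1) ≤ b n ^ 2)
    (haint : ∀ i j k : ℕ, i ≤ j → j ≤ k → a i ≠ 0 → a k ≠ 0 → a j ≠ 0)
    (hbint : ∀ i j k : ℕ, i ≤ j → j ≤ k → b i ≠ 0 → b k ≠ 0 → b j ≠ 0)
    (c : ℕ → NNReal) (hc : ∀ n, c n = ∑ k ∈ Finset.range (n + 1), a k * b (n - k)) :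
    ∀ n : ℕ, 1 ≤ n → c (n - 1) * c (n + 1) ≤ c n ^ 2 := by
  intro n hn
  obtain ⟨m, rfl⟩ : ∃ m, n = m + 1 := ⟨n - 1, by omega⟩
  have hA := (ratioAntitone_of_logConcave (fun k => by simpa using halc (k + 1) le_add_self)
    haint).zeroExtend
  have hB := (ratioAntitone_of_logConcave (fun k => by simpa using hblc (k + 1) le_add_self)
    hbint).zeroExtend
  have key := hA.sum_mul_sum_le hB (Ico (-1) (m + 2)) m
  rw [add_tsub_cancel_right, sq, hc, hc, hc]
  rwa [← sum_range_eq_sum_Ico_zeroExtend a b m rfl (by norm_num) (by omega),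
    ← sum_range_eq_sum_Ico_zeroExtend_succ a b (m + 2) (by push_cast; ring) (by norm_num)
      (by omega),
    ← sum_range_eq_sum_Ico_zeroExtend a b (m + 1) (by push_cast; ring) (by norm_num) (by omega),
    ← sum_range_eq_sum_Ico_zeroExtend_succ a b (m + 1) (by push_cast; ring) (by norm_num)
      (by omega)] at key

theorem stmt_2 (a b : ℕ → NNReal)
    (hafin : (Function.support a).Finite) (hbfin : (Function.support b).Finite)
    (halc : ∀ n : ℕ, 1 ≤ n → a (n - 1) * a (n + 1) ≤ a n ^ 2)
    (hblc : ∀ n : ℕ, 1 ≤ n → b (n - 1) * b (n + 1) ≤ b n ^ 2)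
    (haint : ∀ i j k : ℕ, i ≤ j → j ≤ k → a i ≠ 0 → a k ≠ 0 → a j ≠ 0)
    (hbint : ∀ i j k : ℕ, i ≤ j → j ≤ k → b i ≠ 0 → b k ≠ 0 → b j ≠ 0)
    (c : ℕ → NNReal) (hc : ∀ n, c n = ∑ k ∈ Finset.range (n + 1), a k * b (n - k)) :
    ∀ n : ℕ, 1 ≤ n → c (n - 1) * c (n + 1) ≤ c n ^ 2 :=
  stmt_2_general a b halc hblc haint hbint c hc
end

section
/- For the unitary group U(n) (equivalently GL(n,ℂ)), the function λ ↦ log dim V^λ on dominant integral weights is concave: if λ, μ, ν are dominant weights of GL(n) with 2ν = λ + μ, then (dim V^ν)² ≥ (dim V^λ)·(dim V^μ), where dim V^λ = ∏_{1≤i<j≤n} (λ_i - λ_j + j - i)/(j - i) by the Weyl dimension formula. -/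
/-- Weyl dimension formula for `GL(n)`. -/
noncomputable def glDim (n : ℕ) (l : Fin n → ℤ) : ℚ :=
  ∏ p ∈ Finset.univ.filter (fun p : Fin n × Fin n => p.1 < p.2),
    (((l p.1 - l p.2 : ℤ) : ℚ) + ((p.2 : ℕ) : ℚ) - ((p.1 : ℕ) : ℚ)) /
      (((p.2 : ℕ) : ℚ) - ((p.1 : ℕ) : ℚ))

theorem stmt_5 (n : ℕ) (lam mu nu : Fin n → ℤ)
    (hlam : ∀ i j : Fin n, i ≤ j → lam j ≤ lam i)
    (hmu : ∀ i j : Fin n, i ≤ j → mu j ≤ mu i)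
    (hnu : ∀ i j : Fin n, i ≤ j → nu j ≤ nu i)
    (hmid : ∀ i, 2 * nu i = lam i + mu i) :
    glDim n lam * glDim n mu ≤ (glDim n nu) ^ 2 := by
  unfold glDim
  rw [← Finset.prod_mul_distrib, ← Finset.prod_pow]
  apply Finset.prod_le_prod
  · intro p hp
    simp only [Finset.mem_filter] at hp
    have hij : p.1 < p.2 := hp.2
    have hd : (0:ℚ) < ((p.2 : ℕ) : ℚ) - ((p.1 : ℕ) : ℚ) := by
      have h1 : (p.1 : ℕ) < (p.2 : ℕ) := hij
      have h2 : ((p.1 : ℕ) : ℚ) < ((p.2 : ℕ) : ℚ) := by exact_mod_cast h1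
      linarith
    have ha : (0:ℚ) ≤ ((lam p.1 - lam p.2 : ℤ) : ℚ) := by
      have := hlam p.1 p.2 hij.le; exact_mod_cast sub_nonneg.mpr this
    have hb : (0:ℚ) ≤ ((mu p.1 - mu p.2 : ℤ) : ℚ) := by
      have := hmu p.1 p.2 hij.le; exact_mod_cast sub_nonneg.mpr this
    apply mul_nonneg <;> apply div_nonneg <;> linarith
  · intro p hp
    simp only [Finset.mem_filter] at hp
    have hij : p.1 < p.2 := hp.2
    have hd : (0:ℚ) < ((p.2 : ℕ) : ℚ) - ((p.1 : ℕ) : ℚ) := by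
      have h1 : (p.1 : ℕ) < (p.2 : ℕ) := hij
      have h2 : ((p.1 : ℕ) : ℚ) < ((p.2 : ℕ) : ℚ) := by exact_mod_cast h1
      linarith
    set d : ℚ := ((p.2 : ℕ) : ℚ) - ((p.1 : ℕ) : ℚ) with hdef
    set a : ℚ := ((lam p.1 - lam p.2 : ℤ) : ℚ) + d
    set b : ℚ := ((mu p.1 - mu p.2 : ℤ) : ℚ) + d
    set c : ℚ := ((nu p.1 - nu p.2 : ℤ) : ℚ) + d
    have hc2 : 2 * c = a + b := by
      have h1 := hmid p.1
      have h2 := hmid p.2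
      simp only [a, b, c]
      push_cast
      have h1' : (2:ℚ) * (nu p.1 : ℚ) = (lam p.1 : ℚ) + (mu p.1 : ℚ) := by exact_mod_cast h1
      have h2' : (2:ℚ) * (nu p.2 : ℚ) = (lam p.2 : ℚ) + (mu p.2 : ℚ) := by exact_mod_cast h2
      ring_nf
      linarith
    have ha : 0 ≤ a := by
      have := hlam p.1 p.2 hij.le
      have : (0:ℚ) ≤ ((lam p.1 - lam p.2 : ℤ) : ℚ) := by exact_mod_cast sub_nonneg.mpr this
      simp only [a]; linarith
    have hb : 0 ≤ b := by
      have := hmu p.1 p.2 hij.le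
      have : (0:ℚ) ≤ ((mu p.1 - mu p.2 : ℤ) : ℚ) := by exact_mod_cast sub_nonneg.mpr this
      simp only [b]; linarith
    have key : a * b ≤ c ^ 2 := by nlinarith [sq_nonneg (a - b)]
    rw [div_mul_div_comm, div_pow, div_le_div_iff₀ (by positivity) (by positivity)]
    have e1 : (((lam p.1 - lam p.2 : ℤ) : ℚ) + ((p.2 : ℕ) : ℚ) - ((p.1 : ℕ) : ℚ)) = a := by
      simp only [a, d]; ring
    have e2 : (((mu p.1 - mu p.2 : ℤ) : ℚ) + ((p.2 : ℕ) : ℚ) - ((p.1 : ℕ) : ℚ)) = b := by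
      simp only [b, d]; ring
    have e3 : (((nu p.1 - nu p.2 : ℤ) : ℚ) + ((p.2 : ℕ) : ℚ) - ((p.1 : ℕ) : ℚ)) = c := by
      simp only [c, d]; ring
    rw [e1, e2, e3]
    nlinarith [key, mul_pos hd hd]
end

section
/- Let G be a group and V^λ finite-dimensional G-modules indexed by λ in a monoid. Suppose that for all μ, ν in the index set with μ + ν even (i.e., (μ+ν)/2 defined), there is an injection of G-modules V^μ ⊗ V^ν ↪ V^((μ+ν)/2) ⊗ V^((μ+ν)/2). Then dim(V^μ ⊗ V^ν ⊗ V^{μ'} ⊗ V^{ν'})^G ≤ dim((V^{(μ+μ')/2} ⊗ V^{(ν+ν')/2})^{⊗2})^G whenever the half-sums (μ+μ')/2 and (ν+ν')/2 are defined. -/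
open scoped TensorProduct

theorem stmt_9 {G : Type*} [Group G] {Λ : Type*} [AddCommMonoid Λ]
    (W : Λ → Type) [∀ l, AddCommGroup (W l)] [∀ l, Module ℂ (W l)]
    [∀ l, FiniteDimensional ℂ (W l)]
    (ρ : ∀ l : Λ, Representation ℂ G (W l))
    (hemb : ∀ μ ν σ : Λ, μ + ν = σ + σ →
      ∃ φ : (W μ ⊗[ℂ] W ν) →ₗ[ℂ] (W σ ⊗[ℂ] W σ), Function.Injective φ ∧
        ∀ g : G, φ ∘ₗ ((ρ μ).tprod (ρ ν)) g = (((ρ σ).tprod (ρ σ)) g) ∘ₗ φ) :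
    ∀ μ μ' ν ν' σ τ : Λ, μ + μ' = σ + σ → ν + ν' = τ + τ →
      Module.finrank ℂ
          ((((ρ μ).tprod (ρ μ')).tprod ((ρ ν).tprod (ρ ν'))).invariants : Submodule ℂ _) ≤
        Module.finrank ℂ
          ((((ρ σ).tprod (ρ τ)).tprod ((ρ σ).tprod (ρ τ))).invariants : Submodule ℂ _) := by
  intro μ μ' ν ν' σ τ hμ hν
  obtain ⟨φ₁, h₁inj, h₁comm⟩ := hemb μ μ' σ hμ
  obtain ⟨φ₂, h₂inj, h₂comm⟩ := hemb ν ν' τ hν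
  set e := TensorProduct.tensorTensorTensorComm ℂ (W σ) (W σ) (W τ) (W τ)
  set ψ : ((W μ ⊗[ℂ] W μ') ⊗[ℂ] (W ν ⊗[ℂ] W ν')) →ₗ[ℂ]
      ((W σ ⊗[ℂ] W τ) ⊗[ℂ] (W σ ⊗[ℂ] W τ)) :=
    (e : ((W σ ⊗[ℂ] W σ) ⊗[ℂ] (W τ ⊗[ℂ] W τ)) →ₗ[ℂ] _) ∘ₗ TensorProduct.map φ₁ φ₂
      with hψ
  have hψinj : Function.Injective ψ := by
    apply e.injective.comp
    have h1 : Function.Injective (LinearMap.rTensor (W ν ⊗[ℂ] W ν') φ₁) :=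
      Module.Flat.rTensor_preserves_injective_linearMap φ₁ h₁inj
    have h2 : Function.Injective (LinearMap.lTensor (W σ ⊗[ℂ] W σ) φ₂) :=
      Module.Flat.lTensor_preserves_injective_linearMap φ₂ h₂inj
    have : TensorProduct.map φ₁ φ₂ =
        (LinearMap.lTensor (W σ ⊗[ℂ] W σ) φ₂) ∘ₗ (LinearMap.rTensor (W ν ⊗[ℂ] W ν') φ₁) := by
      ext; simp
    rw [this]
    exact h2.comp h1
  have hψcomm : ∀ g : G,
      ψ ∘ₗ (((ρ μ).tprod (ρ μ')).tprod ((ρ ν).tprod (ρ ν'))) g =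
        ((((ρ σ).tprod (ρ τ)).tprod ((ρ σ).tprod (ρ τ))) g) ∘ₗ ψ := by
    intro g
    ext x y z w
    have e1 := LinearMap.congr_fun (h₁comm g) (x ⊗ₜ y)
    have e2 := LinearMap.congr_fun (h₂comm g) (z ⊗ₜ w)
    simp only [LinearMap.comp_apply, TensorProduct.map_tmul, Representation.tprod_apply] at e1 e2
    simp only [hψ, TensorProduct.AlgebraTensorModule.curry_apply,
      TensorProduct.curry_apply, LinearMap.coe_restrictScalars,
      LinearMap.comp_apply, TensorProduct.map_tmul, LinearEquiv.coe_coe, Representation.tprod_apply]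
    rw [e1, e2]
    induction φ₁ (x ⊗ₜ y) using TensorProduct.induction_on with
    | zero => simp
    | tmul a b =>
      induction φ₂ (z ⊗ₜ w) using TensorProduct.induction_on with
      | zero => simp
      | tmul c d => simp [e, TensorProduct.tensorTensorTensorComm_tmul]
      | add p q hp hq => simp only [TensorProduct.tmul_add, map_add, hp, hq]
    | add p q hp hq => simp only [TensorProduct.add_tmul, map_add, hp, hq]
  have hmaps : ∀ x ∈ (((ρ μ).tprod (ρ μ')).tprod ((ρ ν).tprod (ρ ν'))).invariants,
      ψ x ∈ ((((ρ σ).tprod (ρ τ)).tprod ((ρ σ).tprod (ρ τ)))).invariants := by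
    intro x hx g
    have := LinearMap.congr_fun (hψcomm g) x
    simp only [LinearMap.comp_apply] at this
    rw [← this, hx g]
  let ψ' := ψ.restrict hmaps
  have hψ'inj : Function.Injective ψ' := fun a b h => by
    apply Subtype.ext
    exact hψinj (congrArg Subtype.val h)
  exact LinearMap.finrank_le_finrank_of_injective hψ'inj
end

section
/- Let Γ ⊆ ℤ^{1+d} be a subsemigroup contained in ℕ × ℤᵈ generating ℤ^{1+d} as a group, and suppose |Γ ∩ ({k} × ℤᵈ)| < ∞ for all k. Let ∇ be the closed convex cone generated by Γ and Δ = ∇ ∩ ({1} × ℝᵈ). If there exists γ ∈ Γ with (∇ + γ) ∩ ℤ^{1+d} ⊆ Γ (Khovanskii's property), then |Γ ∩ ({k} × ℤᵈ)| / kᵈ → vol(Δ) as k → ∞, where vol is d-dimensional Lebesgue measure on {1} × ℝᵈ ≅ ℝᵈ and Δ is assumed bounded of dimension d. -/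
/-!
Khovanskii's property sandwiches the level `Γₖ = Γ ∩ ({k} × ℤᵈ)`: since `Γ ⊆ ∇`, the map
`x ↦ x.2` injects `Γₖ` into the lattice points of `k • Δ`, and `μ ↦ (k, μ + γ.2)` injects the
lattice points of `(k - γ.1) • Δ` into `Γₖ`. The slice `Δ` is convex, so its frontier is
Lebesgue-null and the number of lattice points of `n • Δ` is `vol(Δ) nᵈ + o(nᵈ)` (a Riemann sum
of the indicator of `Δ`); both bounds therefore grow like `vol(Δ) kᵈ`.
-/

open MeasureTheory Filter

/-- The embedding of the lattice `ℤ × ℤᵈ` into `ℝ × ℝᵈ`. -/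
def latticeEmb (d : ℕ) (x : ℤ × (Fin d → ℤ)) : ℝ × (Fin d → ℝ) :=
  ((x.1 : ℝ), fun i => (x.2 i : ℝ))

open Bornology

def rayCone {E : Type*} [AddCommGroup E] [Module ℝ E] (K : Set E) : Set E :=
  {v | ∃ t : ℝ, 0 ≤ t ∧ ∃ w ∈ K, v = t • w}

section RayCone

variable {E : Type*} [AddCommGroup E] [Module ℝ E] {K : Set E}

theorem subset_rayCone : K ⊆ rayCone K :=
  fun w hw => ⟨1, zero_le_one, w, hw, (one_smul ℝ w).symm⟩

theorem convex_rayCone (hK : Convex ℝ K) (hne : K.Nonempty) : Convex ℝ (rayCone K) := by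
  rintro _ ⟨t₁, ht₁, w₁, hw₁, rfl⟩ _ ⟨t₂, ht₂, w₂, hw₂, rfl⟩ p q hp hq hpq
  rcases (add_nonneg (mul_nonneg hp ht₁) (mul_nonneg hq ht₂)).eq_or_lt with hT | hT
  · obtain ⟨w₀, hw₀⟩ := hne
    have h₁ : p * t₁ = 0 := by nlinarith [mul_nonneg hp ht₁, mul_nonneg hq ht₂]
    have h₂ : q * t₂ = 0 := by nlinarith [mul_nonneg hp ht₁, mul_nonneg hq ht₂]
    exact ⟨0, le_rfl, w₀, hw₀, by simp [smul_smul, h₁, h₂]⟩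
  · set T := p * t₁ + q * t₂
    refine ⟨T, hT.le, (p * t₁ / T) • w₁ + (q * t₂ / T) • w₂,
      hK hw₁ hw₂ (by positivity) (by positivity) (by rw [← add_div, div_self hT.ne']), ?_⟩
    rw [smul_add, smul_smul, smul_smul, smul_smul, smul_smul, mul_div_cancel₀ _ hT.ne',
      mul_div_cancel₀ _ hT.ne']

theorem smul_mem_closure_rayCone [TopologicalSpace E] [ContinuousConstSMul ℝ E] {c : ℝ}
    (hc : 0 ≤ c) {v : E} (hv : v ∈ closure (rayCone K)) : c • v ∈ closure (rayCone K) := by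
  have hmaps : Set.MapsTo (c • ·) (rayCone K) (rayCone K) := by
    rintro _ ⟨t, ht, w, hw, rfl⟩
    exact ⟨c * t, mul_nonneg hc ht, w, hw, smul_smul c t w⟩
  exact hmaps.closure (continuous_const_smul c) hv

end RayCone

section Slice

variable {E : Type*} [AddCommGroup E] [Module ℝ E] {C : Set (ℝ × E)}

theorem mk_mem_iff_one_inv_smul_mem (hC : ∀ c : ℝ, 0 < c → ∀ v ∈ C, c • v ∈ C) {t : ℝ}
    (ht : 0 < t) (y : E) : (t, y) ∈ C ↔ ((1 : ℝ), t⁻¹ • y) ∈ C := by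
  constructor
  · intro h
    simpa [inv_mul_cancel₀ ht.ne'] using hC t⁻¹ (inv_pos.mpr ht) _ h
  · intro h
    simpa [smul_smul, mul_inv_cancel₀ ht.ne'] using hC t ht _ h

theorem convex_slice (hC : Convex ℝ C) : Convex ℝ {x | ((1 : ℝ), x) ∈ C} := by
  intro x hx y hy a b ha hb hab
  simpa [hab] using hC hx hy ha hb hab

end Slice

def dilateLatticePoints {ι : Type*} (s : Set (ι → ℝ)) (r : ℝ) : Set (ι → ℤ) :=
  {μ | r⁻¹ • (fun i => (μ i : ℝ)) ∈ s}

section LatticeCount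

open Submodule Pointwise BoxIntegral.unitPartition

variable {ι : Type*} (n : ℕ) [NeZero n]

local notation "L" => span ℤ (Set.range (Pi.basisFun ℝ ι))

theorem injective_inv_smul_intCast :
    Function.Injective (fun μ : ι → ℤ => (n : ℝ)⁻¹ • fun i => (μ i : ℝ)) := by
  intro μ ν h
  ext i
  simpa [NeZero.ne (n : ℝ)] using congrFun h i

variable [Finite ι] (s : Set (ι → ℝ))

theorem image_dilateLatticePoints :
    (fun μ : ι → ℤ => (n : ℝ)⁻¹ • fun i => (μ i : ℝ)) '' dilateLatticePoints s n
      = s ∩ (n : ℝ)⁻¹ • (L : Set (ι → ℝ)) := by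
  ext v
  simp only [Set.mem_image, dilateLatticePoints, Set.mem_ofPred_eq, Set.mem_inter_iff,
    ← coe_pointwise_smul, SetLike.mem_coe, mem_smul_span_iff]
  constructor
  · rintro ⟨μ, hμ, rfl⟩
    refine ⟨hμ, fun i => ⟨μ i, ?_⟩⟩
    simp [mul_inv_cancel_left₀ (NeZero.ne (n : ℝ))]
  · rintro ⟨hv, hL⟩
    choose μ hμ using hL
    have hv_eq : ((n : ℝ)⁻¹ • fun i => (μ i : ℝ)) = v := by
      ext i
      have hμi := hμ i
      simp only [algebraMap_int_eq, eq_intCast] at hμi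
      simp [hμi, inv_mul_cancel_left₀ (NeZero.ne (n : ℝ))]
    exact ⟨μ, hv_eq ▸ hv, hv_eq⟩

theorem ncard_dilateLatticePoints :
    (dilateLatticePoints s n).ncard = Nat.card ↑(s ∩ (n : ℝ)⁻¹ • (L : Set (ι → ℝ))) := by
  rw [← image_dilateLatticePoints, Nat.card_coe_set_eq,
    Set.ncard_image_of_injective _ (injective_inv_smul_intCast n)]

variable {s}

theorem finite_dilateLatticePoints (hs : IsBounded s) : (dilateLatticePoints s n).Finite := by
  have := Fintype.ofFinite ι
  refine Set.Finite.of_finite_image ?_ (injective_inv_smul_intCast n).injOn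
  rw [image_dilateLatticePoints, ← inv_smul_smul₀ (NeZero.ne (n : ℝ)) s,
    ← Set.smul_set_inter₀ (inv_ne_zero (NeZero.ne (n : ℝ)))]
  exact (ZSpan.setFinite_inter _ (hs.smul₀ _)).smul_set

end LatticeCount

theorem tendsto_ncard_dilateLatticePoints_div_pow {ι : Type*} [Fintype ι] {s : Set (ι → ℝ)}
    (hb : IsBounded s) (hm : MeasurableSet s) (hf : volume (frontier s) = 0) :
    Tendsto (fun n : ℕ => ((dilateLatticePoints s n).ncard : ℝ) / n ^ Fintype.card ι)
      atTop (nhds (volume s).toReal) := by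
  refine (tendsto_card_div_pow_atTop_volume s hb hm hf).congr' ?_
  filter_upwards [eventually_ge_atTop 1] with n hn
  have : NeZero n := ⟨by omega⟩
  rw [ncard_dilateLatticePoints]

theorem Filter.Tendsto.div_pow_comp_toNat_sub {u : ℕ → ℝ} {d : ℕ} {l : ℝ}
    (h : Tendsto (fun n : ℕ => u n / (n : ℝ) ^ d) atTop (nhds l)) (c : ℤ) :
    Tendsto (fun k : ℕ => u ((k : ℤ) - c).toNat / (k : ℝ) ^ d) atTop (nhds l) := by
  set a : ℕ → ℕ := fun k => ((k : ℤ) - c).toNat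
  have ha : Tendsto a atTop atTop :=
    tendsto_atTop_atTop.mpr fun b => ⟨b + c.toNat, fun k hk => by simp only [a]; omega⟩
  have ha_cast : ∀ᶠ k : ℕ in atTop, (a k : ℝ) = k - c := by
    filter_upwards [eventually_ge_atTop c.toNat] with k hk
    have : ((a k : ℕ) : ℤ) = k - c := by simp only [a]; omega
    exact_mod_cast this
  have hratio : Tendsto (fun k : ℕ => ((a k : ℝ) / k) ^ d) atTop (nhds 1) := by
    have h₁ : Tendsto (fun k : ℕ => 1 - (c : ℝ) / k) atTop (nhds 1) := by
      simpa using tendsto_const_nhds.sub (tendsto_const_div_atTop_nhds_zero_nat (c : ℝ))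
    refine (one_pow (M := ℝ) d ▸ h₁.pow d).congr' ?_
    filter_upwards [ha_cast, eventually_gt_atTop 0] with k hk hk₀
    rw [hk, sub_div, div_self (by positivity)]
  refine (mul_one l ▸ (h.comp ha).mul hratio).congr' ?_
  filter_upwards [ha.eventually_gt_atTop 0, eventually_gt_atTop 0] with k hak hk
  have hak' : (a k : ℝ) ≠ 0 := by positivity
  simp only [Function.comp_apply, div_pow]
  field_simp
  rfl

section Levels

variable {d : ℕ} {Γ : Set (ℤ × (Fin d → ℤ))} {C : Set (ℝ × (Fin d → ℝ))}

theorem mapsTo_snd_level_dilateLatticePoints (hC : ∀ c : ℝ, 0 < c → ∀ v ∈ C, c • v ∈ C)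
    (hΓ : ∀ x ∈ Γ, latticeEmb d x ∈ C) {k : ℕ} (hk : 0 < k) :
    Set.MapsTo Prod.snd {x ∈ Γ | x.1 = k} (dilateLatticePoints {y | ((1 : ℝ), y) ∈ C} k) := by
  rintro x ⟨hx, hxk⟩
  have hmem := hΓ x hx
  rwa [latticeEmb, hxk, Int.cast_natCast, mk_mem_iff_one_inv_smul_mem hC (by positivity)]
    at hmem

theorem injOn_snd_level (k : ℤ) : Set.InjOn Prod.snd {x ∈ Γ | x.1 = k} :=
  fun _ hx _ hy h => Prod.ext (hx.2.trans hy.2.symm) h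

theorem ncard_level_le (hC : ∀ c : ℝ, 0 < c → ∀ v ∈ C, c • v ∈ C)
    (hΓ : ∀ x ∈ Γ, latticeEmb d x ∈ C) (hb : IsBounded {y | ((1 : ℝ), y) ∈ C}) {k : ℕ}
    (hk : 0 < k) :
    {x ∈ Γ | x.1 = k}.ncard ≤ (dilateLatticePoints {y | ((1 : ℝ), y) ∈ C} k).ncard :=
  have : NeZero k := ⟨hk.ne'⟩
  Set.ncard_le_ncard_of_injOn _ (mapsTo_snd_level_dilateLatticePoints hC hΓ hk)
    (injOn_snd_level _) (finite_dilateLatticePoints k hb)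

theorem le_ncard_level (hC : ∀ c : ℝ, 0 < c → ∀ v ∈ C, c • v ∈ C)
    (hΓ : ∀ x ∈ Γ, latticeEmb d x ∈ C) (hb : IsBounded {y | ((1 : ℝ), y) ∈ C})
    {γ : ℤ × (Fin d → ℤ)} (hγ : ∀ z, latticeEmb d z - latticeEmb d γ ∈ C → z ∈ Γ)
    {m k : ℕ} (hm : 0 < m) (hk : 0 < k) (hmk : (m : ℤ) + γ.1 = k) :
    (dilateLatticePoints {y | ((1 : ℝ), y) ∈ C} m).ncard ≤ {x ∈ Γ | x.1 = k}.ncard := by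
  have : NeZero k := ⟨hk.ne'⟩
  have hfin : {x ∈ Γ | x.1 = k}.Finite :=
    (finite_dilateLatticePoints k hb).of_injOn
      (mapsTo_snd_level_dilateLatticePoints hC hΓ hk) (injOn_snd_level _)
  refine Set.ncard_le_ncard_of_injOn (fun μ => ((k : ℤ), μ + γ.2)) (fun μ hμ => ⟨hγ _ ?_, rfl⟩)
    (fun μ _ ν _ h => add_right_cancel (Prod.ext_iff.mp h).2) hfin
  have hdiff :
      latticeEmb d ((k : ℤ), μ + γ.2) - latticeEmb d γ = ((m : ℝ), fun i => (μ i : ℝ)) := by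
    rw [← hmk]
    ext <;> simp [latticeEmb]
  rw [hdiff, mk_mem_iff_one_inv_smul_mem hC (by positivity)]
  exact hμ

end Levels

theorem stmt_14_general (d : ℕ) (Γ : Set (ℤ × (Fin d → ℤ)))
    -- `∇` is the closed convex cone generated by `Γ`
    (nabla : Set (ℝ × (Fin d → ℝ)))
    (hnabla : nabla = closure {v | ∃ t : ℝ, 0 ≤ t ∧
      ∃ w ∈ convexHull ℝ (latticeEmb d '' Γ), v = t • w})
    -- `Δ` is the slice of `∇` at height 1, assumed compact with nonempty interior
    (Δ : Set (Fin d → ℝ)) (hΔ : Δ = {x | ((1 : ℝ), x) ∈ nabla})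
    (hΔcompact : IsCompact Δ)
    -- Khovanskii's property
    (hKh : ∃ γ ∈ Γ, ∀ z : ℤ × (Fin d → ℤ),
      latticeEmb d z - latticeEmb d γ ∈ nabla → z ∈ Γ) :
    Tendsto (fun k : ℕ => ({x ∈ Γ | x.1 = (k : ℤ)}.ncard : ℝ) / (k : ℝ) ^ d)
      atTop (nhds (volume Δ).toReal) := by
  obtain ⟨γ, hγΓ, hγ⟩ := hKh
  have hC : ∀ c : ℝ, 0 < c → ∀ v ∈ nabla, c • v ∈ nabla :=
    hnabla ▸ fun c hc v hv => smul_mem_closure_rayCone hc.le hv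
  have hΓ : ∀ x ∈ Γ, latticeEmb d x ∈ nabla :=
    hnabla ▸ fun x hx => subset_closure (subset_rayCone (subset_convexHull ℝ _ ⟨x, hx, rfl⟩))
  have hconv : Convex ℝ nabla := hnabla ▸ (convex_rayCone (convex_convexHull ℝ _)
    ⟨_, subset_convexHull ℝ _ (Set.mem_image_of_mem _ hγΓ)⟩).closure
  subst hΔ
  have hcount := tendsto_ncard_dilateLatticePoints_div_pow hΔcompact.isBounded
    hΔcompact.measurableSet ((convex_slice hconv).addHaar_frontier volume)
  rw [Fintype.card_fin] at hcount
  refine tendsto_of_tendsto_of_tendsto_of_le_of_le' (hcount.div_pow_comp_toNat_sub γ.1) hcount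
    ?_ ?_
  · filter_upwards [eventually_gt_atTop γ.1.toNat] with k hk
    gcongr
    exact_mod_cast le_ncard_level hC hΓ hΔcompact.isBounded hγ (by omega) (by omega) (by omega)
  · filter_upwards [eventually_gt_atTop 0] with k hk
    gcongr
    exact_mod_cast ncard_level_le hC hΓ hΔcompact.isBounded hk

theorem stmt_14 (d : ℕ) (Γ : Set (ℤ × (Fin d → ℤ)))
    (hadd : ∀ x ∈ Γ, ∀ y ∈ Γ, x + y ∈ Γ)
    (hpos : ∀ x ∈ Γ, 0 ≤ x.1)
    (hgen : AddSubgroup.closure Γ = (⊤ : AddSubgroup (ℤ × (Fin d → ℤ))))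
    (hfin : ∀ k : ℤ, {x ∈ Γ | x.1 = k}.Finite)
    -- `∇` is the closed convex cone generated by `Γ`
    (nabla : Set (ℝ × (Fin d → ℝ)))
    (hnabla : nabla = closure {v | ∃ t : ℝ, 0 ≤ t ∧
      ∃ w ∈ convexHull ℝ (latticeEmb d '' Γ), v = t • w})
    -- `Δ` is the slice of `∇` at height 1, assumed compact with nonempty interior
    (Δ : Set (Fin d → ℝ)) (hΔ : Δ = {x | ((1 : ℝ), x) ∈ nabla})
    (hΔcompact : IsCompact Δ) (hΔfull : (interior Δ).Nonempty)
    -- Khovanskii's property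
    (hKh : ∃ γ ∈ Γ, ∀ z : ℤ × (Fin d → ℤ),
      latticeEmb d z - latticeEmb d γ ∈ nabla → z ∈ Γ) :
    Tendsto (fun k : ℕ => ({x ∈ Γ | x.1 = (k : ℤ)}.ncard : ℝ) / (k : ℝ) ^ d)
      atTop (nhds (volume Δ).toReal) :=
  stmt_14_general d Γ nabla hnabla Δ hΔ hΔcompact hKh
end

section
/- If Γ ⊆ ℤ^{1+d} is a semigroup contained in ℕ×ℤᵈ and Γ_S = Γ, with ∇ the closed cone generated by Γ and Δ its height-1 slice, then for the lattice Λ generated by Γ: limsup_{k→∞} |Γ ∩ ({k}×ℤᵈ)| / kᵈ ≤ vol_Λ(Δ), where vol_Λ is Lebesgue measure normalized so that the slice of Λ at height 1 has covolume 1, assuming Δ is compact. -/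
/-!
The points of `Γ` at height `k ≥ 1` lie in `k • Δ`, and any two of them differ by a vector of the
direction lattice `L = M ℤᵈ`. If `det M ≠ 0`, the translates of a fundamental domain `D` of `L`
(of volume `|det M|`) by these points are pairwise disjoint and, `D` being bounded by some `C`, lie
in `k • cthickening (C / k) Δ`; hence there are at most `kᵈ vol (cthickening (C / k) Δ) / |det M|`
of them, and these thickenings shrink to the compact set `Δ`. If `det M = 0`, all the points lie in
one affine hyperplane, on which forgetting a suitable coordinate is injective, so there are only
`O(kᵈ⁻¹)` of them.
-/

open MeasureTheory Filter ENNReal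

open Set Pointwise Topology Submodule Module Metric Matrix

namespace ZSpan

variable {E ι : Type*} [NormedAddCommGroup E] [NormedSpace ℝ E] [Finite ι] (b : Basis ι ℝ E)

theorem pairwiseDisjoint_vadd_fundamentalDomain {T : Set E}
    (hT : ∀ x ∈ T, ∀ y ∈ T, x - y ∈ span ℤ (range b)) :
    T.PairwiseDisjoint (· +ᵥ fundamentalDomain b) := by
  intro x hx y hy hxy
  refine Set.disjoint_left.2 ?_
  rintro _ ⟨v, hv, rfl⟩ ⟨w, hw, hwv : y + w = x + v⟩
  obtain ⟨l, -, hl⟩ := exist_unique_vadd_mem_fundamentalDomain b v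
  have hxy' : (⟨x - y, hT x hx y hy⟩ : span ℤ (range b)) = 0 := by
    refine (hl _ ?_).trans (hl 0 (by simpa using hv)).symm
    show x - y + v ∈ fundamentalDomain b
    rwa [sub_add_eq_add_sub, ← hwv, add_sub_cancel_left]
  exact hxy (sub_eq_zero.1 (congrArg Subtype.val hxy'))

variable [MeasurableSpace E] [BorelSpace E]

theorem ncard_mul_measure_fundamentalDomain_le (μ : Measure E) [μ.IsAddLeftInvariant]
    {T U : Set E} (hT : ∀ x ∈ T, ∀ y ∈ T, x - y ∈ span ℤ (range b))
    (hU : T + fundamentalDomain b ⊆ U) :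
    T.ncard * μ (fundamentalDomain b) ≤ μ U := by
  obtain hfin | hinf := T.finite_or_infinite
  swap
  · simp [hinf.ncard]
  lift T to Finset E using hfin
  calc (T : Set E).ncard * μ (fundamentalDomain b)
      = ∑ x ∈ T, μ (x +ᵥ fundamentalDomain b) := by simp [measure_vadd]
    _ = μ (⋃ x ∈ T, x +ᵥ fundamentalDomain b) :=
      (measure_biUnion_finset (pairwiseDisjoint_vadd_fundamentalDomain b hT)
        fun x _ => (fundamentalDomain_measurableSet b).const_vadd x).symm
    _ ≤ μ U := measure_mono <| iUnion₂_subset fun x hx ↦ by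
      rintro _ ⟨w, hw, rfl⟩
      exact hU (add_mem_add hx hw)

end ZSpan

theorem Matrix.exists_basis_volume_fundamentalDomain {ι : Type*} [Fintype ι] [DecidableEq ι]
    (M : Matrix ι ι ℝ) (hM : M.det ≠ 0) :
    ∃ b : Basis ι ℝ (ι → ℝ), volume (ZSpan.fundamentalDomain b) = ENNReal.ofReal |M.det| ∧
      ∀ z : ι → ℤ, M *ᵥ ((↑) ∘ z) ∈ span ℤ (range b) := by
  let b := (Pi.basisFun ℝ ι).map (M.toLinearEquiv' (M.invertibleOfIsUnitDet hM.isUnit))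
  have hb : ∀ j, b j = Mᵀ j := fun j => by
    ext i
    simp only [b, Basis.map_apply, Pi.basisFun_apply, transpose_apply]
    change Matrix.toLin' M (Pi.single j 1) i = M i j
    simp
  refine ⟨b, ?_, fun z => ?_⟩
  · rw [ZSpan.volume_fundamentalDomain, ← Matrix.det_transpose M]
    congr 3
    ext i j
    simp [hb]
  · rw [Matrix.mulVec_eq_sum]
    refine sum_mem fun j _ => ?_
    rw [op_smul_eq_smul, ← hb, Function.comp_apply, Int.cast_smul_eq_zsmul]
    exact zsmul_mem (subset_span (mem_range_self j)) _

theorem smul_add_closedBall_subset_smul_cthickening {E : Type*} [NormedAddCommGroup E]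
    [NormedSpace ℝ E] {k : ℝ} (hk : 0 < k) (r : ℝ) (s : Set E) :
    k • s + closedBall 0 r ⊆ k • cthickening (r / k) s := by
  rintro _ ⟨_, ⟨x, hx, rfl⟩, w, hw, rfl⟩
  refine ⟨x + k⁻¹ • w, mem_cthickening_of_dist_le _ x _ _ hx ?_, ?_⟩
  · rw [mem_closedBall_zero_iff] at hw
    rw [dist_eq_norm, add_sub_cancel_left, norm_smul, norm_inv, Real.norm_of_nonneg hk.le,
      inv_mul_eq_div]
    gcongr
  · simp [smul_add, smul_inv_smul₀ hk.ne']

theorem ncard_le_of_intCast_sub_mem_of_ne_top {ι : Type*} [Fintype ι]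
    {W : Submodule ℝ (ι → ℝ)} (hW : W ≠ ⊤) {T : Set (ι → ℤ)}
    (hTW : ∀ x ∈ T, ∀ y ∈ T, ((↑) ∘ (x - y) : ι → ℝ) ∈ W) (N : ℕ)
    (hN : ∀ x ∈ T, ∀ i, |x i| ≤ N) :
    T.ncard ≤ (2 * N + 1) ^ (Fintype.card ι - 1) := by
  classical
  obtain ⟨φ, hφ0, hφW⟩ := exists_dual_map_eq_bot_of_lt_top hW.lt_top inferInstance
  obtain ⟨j, hj⟩ : ∃ j, φ (Pi.single j 1) ≠ 0 := by
    by_contra! h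
    exact hφ0 ((Pi.basisFun ℝ ι).ext fun j => by simpa using h j)
  -- a vector of `W` is determined by its coordinates off `j`, since `φ` vanishes on `W`
  let π : (ι → ℤ) → ({i // i ≠ j} → ℤ) := fun x i => x i
  have hπ : InjOn π T := by
    intro x hx y hy hxy
    have hoff : ∀ i ≠ j, x i = y i := fun i hi => congrFun hxy ⟨i, hi⟩
    have hsingle : ((↑) ∘ (x - y) : ι → ℝ) = ((x j - y j : ℤ) : ℝ) • Pi.single j 1 := by
      ext i
      by_cases hi : i = j
      · subst hi; simp
      · simp [hi, hoff i hi]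
    have hφxy : φ ((↑) ∘ (x - y)) = 0 := by
      simpa [hφW] using mem_map_of_mem (f := φ) (hTW x hx y hy)
    rw [hsingle, map_smul, smul_eq_zero, Int.cast_eq_zero, sub_eq_zero] at hφxy
    ext i
    by_cases hi : i = j
    · exact hi ▸ hφxy.resolve_right hj
    · exact hoff i hi
  let box : Finset ({i // i ≠ j} → ℤ) := Finset.Icc (fun _ => -(N : ℤ)) fun _ => N
  calc T.ncard ≤ (box : Set ({i // i ≠ j} → ℤ)).ncard :=
        ncard_le_ncard_of_injOn π (fun x hx => by
          simp only [box, Finset.coe_Icc, mem_Icc, Pi.le_def]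
          exact ⟨fun i => (abs_le.1 (hN x hx i)).1, fun i => (abs_le.1 (hN x hx i)).2⟩) hπ
    _ = (2 * N + 1) ^ (Fintype.card ι - 1) := by
        rw [ncard_coe_finset, Pi.card_Icc]
        simp only [Int.card_Icc, Finset.prod_const, Finset.card_univ, Fintype.card_subtype_compl,
          Fintype.card_unique]
        congr 1
        omega

theorem ENNReal.tendsto_natCast_div_pow_of_le_mul_pow_pred {d : ℕ} (hd : d ≠ 0) {u : ℕ → ℕ}
    (C : ℕ) (hu : ∀ᶠ k in atTop, u k ≤ C * k ^ (d - 1)) :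
    Tendsto (fun k : ℕ => (u k : ℝ≥0∞) / (k : ℝ≥0∞) ^ d) atTop (𝓝 0) := by
  have hbound : ∀ k ≠ 0, u k ≤ C * k ^ (d - 1) →
      (u k : ℝ≥0∞) / (k : ℝ≥0∞) ^ d ≤ C * (k : ℝ≥0∞)⁻¹ := by
    intro k hk0 hk
    calc (u k : ℝ≥0∞) / (k : ℝ≥0∞) ^ d
        ≤ C * (k : ℝ≥0∞) ^ (d - 1) / (k * (k : ℝ≥0∞) ^ (d - 1)) := by
          rw [← pow_succ', Nat.sub_add_cancel (Nat.one_le_iff_ne_zero.2 hd)]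
          gcongr
          exact_mod_cast hk
      _ = C * (k : ℝ≥0∞)⁻¹ := by
          rw [ENNReal.mul_div_mul_right _ _ (by positivity) (by simp), div_eq_mul_inv]
  refine tendsto_of_tendsto_of_tendsto_of_le_of_le' tendsto_const_nhds ?_
    (Eventually.of_forall fun _ => zero_le)
    ((eventually_ne_atTop 0).and hu |>.mono fun k hk => hbound k hk.1 hk.2)
  simpa using ENNReal.Tendsto.const_mul ENNReal.tendsto_inv_nat_nhds_zero
    (Or.inr (natCast_ne_top C))

section HeightSlices

variable {d : ℕ} {M : Matrix (Fin d) (Fin d) ℝ} {Δ : Set (Fin d → ℝ)} {P : ℕ → Set (Fin d → ℤ)}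

theorem tendsto_ncard_div_pow_of_det_eq_zero (hdet : M.det = 0) (hΔ : Bornology.IsBounded Δ)
    (hPΔ : ∀ k ≥ 1, ∀ w ∈ P k, ((↑) ∘ w : Fin d → ℝ) ∈ (k : ℝ) • Δ)
    (hPM : ∀ k, ∀ v ∈ P k, ∀ w ∈ P k,
      ∃ z : Fin d → ℤ, ((↑) ∘ (v - w) : Fin d → ℝ) = M *ᵥ ((↑) ∘ z)) :
    Tendsto (fun k : ℕ => ((P k).ncard : ℝ≥0∞) / (k : ℝ≥0∞) ^ d) atTop (𝓝 0) := by
  obtain ⟨R₀, hR₀⟩ := hΔ.subset_closedBall 0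
  set R := ⌈R₀⌉₊
  have hd : d ≠ 0 := by rintro rfl; simp at hdet
  have hW : LinearMap.range M.mulVecLin ≠ ⊤ := by
    rw [Ne, LinearMap.range_eq_top, coe_mulVecLin, mulVec_surjective_iff_isUnit,
      isUnit_iff_isUnit_det, hdet]
    exact not_isUnit_zero
  have hcount : ∀ k ≥ 1, (P k).ncard ≤ (2 * R + 1) ^ (d - 1) * k ^ (d - 1) := by
    intro k hk
    calc (P k).ncard ≤ (2 * (R * k) + 1) ^ (Fintype.card (Fin d) - 1) := by
          refine ncard_le_of_intCast_sub_mem_of_ne_top hW (fun v hv w hw => ?_) _ fun w hw i => ?_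
          · obtain ⟨z, hz⟩ := hPM k v hv w hw
            exact ⟨_, hz.symm⟩
          · obtain ⟨x, hx, hxw⟩ := hPΔ k hk w hw
            have hxi : |x i| ≤ R := calc
              |x i| ≤ ‖x‖ := norm_le_pi_norm x i
              _ ≤ R₀ := mem_closedBall_zero_iff.1 (hR₀ hx)
              _ ≤ R := Nat.le_ceil R₀
            have hwi : (w i : ℝ) = k * x i := (congrFun hxw i).symm
            have : |(w i : ℝ)| ≤ R * k := by
              rw [hwi, abs_mul, Nat.abs_cast, mul_comm]
              gcongr
            exact_mod_cast this
      _ ≤ (2 * R + 1) ^ (d - 1) * k ^ (d - 1) := by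
          rw [Fintype.card_fin, ← mul_pow]
          gcongr
          nlinarith
  exact ENNReal.tendsto_natCast_div_pow_of_le_mul_pow_pred hd _
    (eventually_ge_atTop 1 |>.mono hcount)

theorem limsup_ncard_div_pow_le_of_det_ne_zero (hdet : M.det ≠ 0) (hΔ : IsCompact Δ)
    (hPΔ : ∀ k ≥ 1, ∀ w ∈ P k, ((↑) ∘ w : Fin d → ℝ) ∈ (k : ℝ) • Δ)
    (hPM : ∀ k, ∀ v ∈ P k, ∀ w ∈ P k,
      ∃ z : Fin d → ℤ, ((↑) ∘ (v - w) : Fin d → ℝ) = M *ᵥ ((↑) ∘ z)) :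
    limsup (fun k : ℕ => ((P k).ncard : ℝ≥0∞) / (k : ℝ≥0∞) ^ d) atTop
      ≤ volume Δ / ENNReal.ofReal |M.det| := by
  obtain ⟨b, hbvol, hbM⟩ := M.exists_basis_volume_fundamentalDomain hdet
  obtain ⟨C, hC⟩ := (ZSpan.fundamentalDomain_isBounded b).subset_closedBall 0
  have hdet' : ENNReal.ofReal |M.det| ≠ 0 := by simpa using hdet
  have hbound : ∀ k ≥ 1, ((P k).ncard : ℝ≥0∞) / (k : ℝ≥0∞) ^ d
      ≤ volume (cthickening (C / k) Δ) / ENNReal.ofReal |M.det| := by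
    intro k hk
    have hk0 : (0 : ℝ) < k := by exact_mod_cast hk
    set T := ((↑) ∘ · : (Fin d → ℤ) → Fin d → ℝ) '' P k
    have hT : T.ncard = (P k).ncard := ncard_image_of_injective _
      fun v w h => funext fun i => by simpa using congrFun h i
    have hpack := ZSpan.ncard_mul_measure_fundamentalDomain_le b volume (T := T)
      (U := (k : ℝ) • cthickening (C / k) Δ) ?_ ?_
    · rw [hT, hbvol, Measure.addHaar_smul_of_nonneg _ hk0.le, finrank_fin_fun,
        ofReal_pow hk0.le, ofReal_natCast] at hpack
      rw [ENNReal.div_le_iff (by positivity) (by simp), ← ENNReal.mul_div_right_comm,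
        ENNReal.le_div_iff_mul_le (Or.inl hdet') (Or.inl ofReal_ne_top), mul_comm _ ((k : ℝ≥0∞) ^ d)]
      exact hpack
    · rintro _ ⟨v, hv, rfl⟩ _ ⟨w, hw, rfl⟩
      obtain ⟨z, hz⟩ := hPM k v hv w hw
      convert hbM z using 1
      rw [← hz]
      ext i
      simp
    · calc T + ZSpan.fundamentalDomain b ⊆ (k : ℝ) • Δ + closedBall 0 C :=
            add_subset_add (image_subset_iff.2 (hPΔ k hk)) hC
        _ ⊆ _ := smul_add_closedBall_subset_smul_cthickening hk0 C Δ
  have hlim : Tendsto (fun k : ℕ => volume (cthickening (C / k) Δ) / ENNReal.ofReal |M.det|)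
      atTop (𝓝 (volume Δ / ENNReal.ofReal |M.det|)) :=
    ENNReal.Tendsto.div_const ((tendsto_measure_cthickening_of_isCompact hΔ).comp
      (tendsto_const_div_atTop_nhds_zero_nat C)) (Or.inr hdet')
  calc limsup (fun k : ℕ => ((P k).ncard : ℝ≥0∞) / (k : ℝ≥0∞) ^ d) atTop
      ≤ limsup (fun k : ℕ => volume (cthickening (C / k) Δ) / ENNReal.ofReal |M.det|) atTop :=
        limsup_le_limsup (eventually_ge_atTop 1 |>.mono hbound)
    _ = volume Δ / ENNReal.ofReal |M.det| := hlim.limsup_eq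

end HeightSlices

theorem intCast_mem_smul_slice {d : ℕ} {Γ : Set (ℤ × (Fin d → ℤ))} {k : ℕ} (hk : 1 ≤ k)
    {w : Fin d → ℤ} (hw : ((k : ℤ), w) ∈ Γ) :
    ((↑) ∘ w : Fin d → ℝ) ∈ (k : ℝ) • {x | ((1 : ℝ), x) ∈ closure {v | ∃ t : ℝ, 0 ≤ t ∧
      ∃ u ∈ convexHull ℝ (latticeEmb d '' Γ), v = t • u}} := by
  have hk0 : (k : ℝ) ≠ 0 := by positivity
  refine ⟨(k : ℝ)⁻¹ • ((↑) ∘ w), subset_closure ⟨(k : ℝ)⁻¹, by positivity, _,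
    subset_convexHull ℝ _ (mem_image_of_mem _ hw), ?_⟩, smul_inv_smul₀ hk0 _⟩
  ext <;> simp [latticeEmb, hk0]

theorem stmt_16_general (d : ℕ) (Γ : Set (ℤ × (Fin d → ℤ)))
    -- `Λ` is the subgroup generated by `Γ`
    (Λ : AddSubgroup (ℤ × (Fin d → ℤ))) (hΛ : Λ = AddSubgroup.closure Γ)
    -- `M` is a matrix whose columns span (over `ℤ`) the direction lattice of `Λ`
    (M : Matrix (Fin d) (Fin d) ℝ)
    (hM : ∀ w : Fin d → ℤ, ((0 : ℤ), w) ∈ Λ ↔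
      ∃ z : Fin d → ℤ, (fun i => (w i : ℝ)) = M.mulVec (fun i => (z i : ℝ)))
    -- `∇` is the closed convex cone generated by `Γ`
    (nabla : Set (ℝ × (Fin d → ℝ)))
    (hnabla : nabla = closure {v | ∃ t : ℝ, 0 ≤ t ∧
      ∃ w ∈ convexHull ℝ (latticeEmb d '' Γ), v = t • w})
    -- `Δ` is the slice of `∇` at height 1, assumed compact
    (Δ : Set (Fin d → ℝ)) (hΔ : Δ = {x | ((1 : ℝ), x) ∈ nabla})
    (hΔcompact : IsCompact Δ) :
    limsup (fun k : ℕ => ({x ∈ Γ | x.1 = (k : ℤ)}.ncard : ℝ≥0∞) / (k : ℝ≥0∞) ^ d)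
      atTop ≤ volume Δ / ENNReal.ofReal |M.det| := by
  subst hΛ hnabla hΔ
  set P : ℕ → Set (Fin d → ℤ) := fun k => {w | ((k : ℤ), w) ∈ Γ}
  have hcard (k : ℕ) : {x ∈ Γ | x.1 = (k : ℤ)}.ncard = (P k).ncard := by
    have hslice : {x ∈ Γ | x.1 = (k : ℤ)} = Prod.mk (k : ℤ) '' P k := by
      ext ⟨a, w⟩
      constructor
      · rintro ⟨hw, rfl : a = k⟩
        exact ⟨w, hw, rfl⟩
      · rintro ⟨w, hw, ⟨⟩⟩
        exact ⟨hw, rfl⟩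
    rw [hslice, ncard_image_of_injective _ (Prod.mk_right_injective (k : ℤ))]
  have hPΔ : ∀ k ≥ 1, ∀ w ∈ P k, _ := fun k hk w hw => intCast_mem_smul_slice hk hw
  have hPM : ∀ k, ∀ v ∈ P k, ∀ w ∈ P k, ∃ z : Fin d → ℤ,
      ((↑) ∘ (v - w) : Fin d → ℝ) = M *ᵥ ((↑) ∘ z) := by
    intro k v hv w hw
    refine (hM _).1 ?_
    simpa using sub_mem (AddSubgroup.subset_closure (k := Γ) hv)
      (AddSubgroup.subset_closure (k := Γ) hw)
  simp_rw [hcard]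
  -- for `det M = 0` the bound reads `volume Δ / 0`, which is `0` when `volume Δ = 0`
  by_cases hdet : M.det = 0
  · rw [(tendsto_ncard_div_pow_of_det_eq_zero hdet hΔcompact.isBounded hPΔ hPM).limsup_eq]
    exact zero_le
  · exact limsup_ncard_div_pow_le_of_det_ne_zero hdet hΔcompact hPΔ hPM

theorem stmt_16 (d : ℕ) (Γ : Set (ℤ × (Fin d → ℤ)))
    (hadd : ∀ x ∈ Γ, ∀ y ∈ Γ, x + y ∈ Γ)
    (hpos : ∀ x ∈ Γ, 0 ≤ x.1)
    -- `Λ` is the subgroup generated by `Γ`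
    (Λ : AddSubgroup (ℤ × (Fin d → ℤ))) (hΛ : Λ = AddSubgroup.closure Γ)
    -- `M` is a matrix whose columns span (over `ℤ`) the direction lattice of `Λ`
    (M : Matrix (Fin d) (Fin d) ℝ)
    (hM : ∀ w : Fin d → ℤ, ((0 : ℤ), w) ∈ Λ ↔
      ∃ z : Fin d → ℤ, (fun i => (w i : ℝ)) = M.mulVec (fun i => (z i : ℝ)))
    -- `∇` is the closed convex cone generated by `Γ`
    (nabla : Set (ℝ × (Fin d → ℝ)))
    (hnabla : nabla = closure {v | ∃ t : ℝ, 0 ≤ t ∧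
      ∃ w ∈ convexHull ℝ (latticeEmb d '' Γ), v = t • w})
    -- `Δ` is the slice of `∇` at height 1, assumed compact
    (Δ : Set (Fin d → ℝ)) (hΔ : Δ = {x | ((1 : ℝ), x) ∈ nabla})
    (hΔcompact : IsCompact Δ) :
    limsup (fun k : ℕ => ({x ∈ Γ | x.1 = (k : ℤ)}.ncard : ℝ≥0∞) / (k : ℝ≥0∞) ^ d)
      atTop ≤ volume Δ / ENNReal.ofReal |M.det| :=
  stmt_16_general d Γ Λ hΛ M hM nabla hnabla Δ hΔ hΔcompact
end
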